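/- arXiv:1902.00126 — 3 statements merged into one kernel-verified Lean document; each statement's English description precedes it below -/
import Mathlib

section
/- Let g : H → ℝ be convex and L_g-Lipschitz continuous. Then for every β > 0 and every z, the Nesterov smoothing g_β(z) = sup_u (⟨u,z⟩ - g*(u) - (β/2)‖u‖²) satisfies g_β(z) ≤ g(z) ≤ g_β(z) + (β/2)L_g². -/
/-!
A continuous convex function `g` has a subgradient `u₀` at every point `z` (separate `(z, g z)`
from the open convex strict epigraph and represent the functional by Riesz). For a subgradient the
Fenchel–Young inequality is an equality, `g*(u₀) = ⟪z, u₀⟫ - g z`, and the Lipschitz bound forces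
`‖u₀‖ ≤ L_g`. Fenchel–Young bounds every term of the supremum defining `g_β(z)` by `g z`, while the
term at `u₀` equals `g z - (β/2)‖u₀‖² ≥ g z - (β/2)L_g²`.
-/

open RealInnerProductSpace Set

section Subgradient

variable {E : Type*} [TopologicalSpace E] [AddCommGroup E] [Module ℝ E]
  [IsTopologicalAddGroup E] [ContinuousSMul ℝ E] {f : E → ℝ}

theorem ConvexOn.exists_strongDual_le_sub (hf : ConvexOn ℝ univ f) (hfc : Continuous f) (z : E) :
    ∃ ℓ : StrongDual ℝ E, ∀ w, ℓ (w - z) ≤ f w - f z := by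
  have hopen : IsOpen {p : E × ℝ | p.1 ∈ univ ∧ f p.1 < p.2} := by
    simpa using isOpen_lt (hfc.comp continuous_fst) continuous_snd
  obtain ⟨φ, hφ⟩ := geometric_hahn_banach_point_open hf.convex_strict_epigraph hopen
    (x := (z, f z)) (by simp)
  set ℓ := φ.comp (ContinuousLinearMap.inl ℝ E ℝ)
  set c := φ (0, 1)
  have hφ_apply (w : E) (t : ℝ) : φ (w, t) = ℓ w + t * c := by
    have : ((w, t) : E × ℝ) = (w, 0) + t • (0, 1) := by simp
    rw [this, map_add, map_smul, smul_eq_mul]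
    rfl
  have hsep (w : E) (t : ℝ) (ht : f w < t) : ℓ z + f z * c < ℓ w + t * c := by
    simpa only [hφ_apply] using hφ (w, t) ⟨trivial, ht⟩
  -- Comparing with the point `(z, f z + 1)` above `(z, f z)` shows the hyperplane is not vertical.
  have hc : 0 < c := by
    have := hsep z (f z + 1) (by linarith)
    linarith
  refine ⟨-c⁻¹ • ℓ, fun w => ?_⟩
  have hw : (ℓ z - ℓ w) / c + f z ≤ f w := by
    refine le_of_forall_gt_imp_ge_of_dense fun t ht => ?_
    have := hsep w t ht
    rw [div_add' _ _ _ hc.ne', div_le_iff₀ hc]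
    linarith
  have : (-c⁻¹ • ℓ) (w - z) = (ℓ z - ℓ w) / c := by
    simp only [smul_apply, map_sub, smul_eq_mul]
    ring
  linarith

end Subgradient

section InnerProductSpace

variable {H : Type*} [NormedAddCommGroup H] [InnerProductSpace ℝ H] {g : H → ℝ} {u z : H}

theorem ConvexOn.exists_inner_le_sub [CompleteSpace H] (hg : ConvexOn ℝ univ g)
    (hgc : Continuous g) (z : H) : ∃ u : H, ∀ w, ⟪u, w - z⟫ ≤ g w - g z := by
  obtain ⟨ℓ, hℓ⟩ := hg.exists_strongDual_le_sub hgc z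
  exact ⟨(InnerProductSpace.toDual ℝ H).symm ℓ, fun w => by
    rw [InnerProductSpace.toDual_symm_apply]; exact hℓ w⟩

theorem norm_le_of_inner_le_sub {L : ℝ} (hL : 0 ≤ L) (hu : ∀ w, ⟪u, w - z⟫ ≤ g w - g z)
    (hlip : ∀ w, g w - g z ≤ L * ‖w - z‖) : ‖u‖ ≤ L := by
  have h := (hu (z + u)).trans (hlip (z + u))
  rw [add_sub_cancel_left, real_inner_self_eq_norm_sq] at h
  nlinarith [norm_nonneg u]

/-- This is `g*(u)` only where the set is bounded above; elsewhere `sSup` returns the junk value `0`. -/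
noncomputable def fenchelConjugate (g : H → ℝ) (u : H) : ℝ :=
  sSup ((fun w => ⟪w, u⟫ - g w) '' univ)

theorem inner_sub_le_fenchelConjugate (hbdd : BddAbove ((fun w => ⟪w, u⟫ - g w) '' univ))
    (z : H) : ⟪z, u⟫ - g z ≤ fenchelConjugate g u :=
  le_csSup hbdd ⟨z, trivial, rfl⟩

theorem isGreatest_inner_sub_of_inner_le_sub (hu : ∀ w, ⟪u, w - z⟫ ≤ g w - g z) :
    IsGreatest ((fun w => ⟪w, u⟫ - g w) '' univ) (⟪z, u⟫ - g z) := by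
  refine ⟨⟨z, trivial, rfl⟩, ?_⟩
  rintro _ ⟨w, -, rfl⟩
  have := hu w
  rw [inner_sub_right] at this
  dsimp only
  rw [real_inner_comm u w, real_inner_comm u z]
  linarith

end InnerProductSpace

/-- For a convex `L_g`-Lipschitz function `g`, the Nesterov smoothing
`g_β(z) = sup_u (⟪u,z⟫ - g*(u) - (β/2)‖u‖²)` (the supremum being over the
domain of the conjugate `g*`) satisfies `g_β(z) ≤ g(z) ≤ g_β(z) + (β/2)L_g²`. -/
theorem nesterov_smoothing_lipschitz_bounds
    {H : Type*} [NormedAddCommGroup H] [InnerProductSpace ℝ H] [CompleteSpace H]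
    (g : H → ℝ) (hgconv : ConvexOn ℝ Set.univ g)
    (Lg : ℝ) (hLg : 0 ≤ Lg) (hlip : ∀ x y : H, |g x - g y| ≤ Lg * ‖x - y‖)
    (β : ℝ) (hβ : 0 < β) (z : H)
    (gβ : ℝ)
    (hgβ : gβ = sSup {r : ℝ | ∃ u : H,
        BddAbove ((fun w => ⟪w, u⟫ - g w) '' Set.univ) ∧
        r = ⟪u, z⟫ - sSup ((fun w => ⟪w, u⟫ - g w) '' Set.univ) - β / 2 * ‖u‖ ^ 2}) :
    gβ ≤ g z ∧ g z ≤ gβ + β / 2 * Lg ^ 2 := by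
  have hgc : Continuous g := (LipschitzWith.of_dist_le_mul (K := Lg.toNNReal) fun x y => by
    simpa [Real.dist_eq, dist_eq_norm, hLg] using hlip x y).continuous
  obtain ⟨u₀, hu₀⟩ := hgconv.exists_inner_le_sub hgc z
  have hnorm : ‖u₀‖ ≤ Lg :=
    norm_le_of_inner_le_sub hLg hu₀ fun w => (le_abs_self _).trans (hlip w z)
  set S := {r : ℝ | ∃ u : H, BddAbove ((fun w => ⟪w, u⟫ - g w) '' Set.univ) ∧
    r = ⟪u, z⟫ - fenchelConjugate g u - β / 2 * ‖u‖ ^ 2}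
  have hS_le : ∀ r ∈ S, r ≤ g z := by
    rintro r ⟨u, hbdd, rfl⟩
    have := inner_sub_le_fenchelConjugate hbdd z
    rw [real_inner_comm u z] at this
    have : 0 ≤ β / 2 * ‖u‖ ^ 2 := by positivity
    linarith
  have hu₀S : g z - β / 2 * ‖u₀‖ ^ 2 ∈ S := by
    have hmax := isGreatest_inner_sub_of_inner_le_sub hu₀
    refine ⟨u₀, hmax.bddAbove, ?_⟩
    rw [fenchelConjugate, hmax.csSup_eq, real_inner_comm z u₀]
    ring
  have hgβS : gβ = sSup S := hgβ
  have hpenalty : β / 2 * ‖u₀‖ ^ 2 ≤ β / 2 * Lg ^ 2 := by gcongr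
  have hgβ_ge : g z - β / 2 * ‖u₀‖ ^ 2 ≤ gβ := hgβS ▸ le_csSup ⟨g z, hS_le⟩ hu₀S
  exact ⟨hgβS ▸ csSup_le ⟨_, hu₀S⟩ hS_le, by linarith⟩
end

section
/- Three-point inequality for the proximal step: let h : H → ℝ ∪ {+∞} be proper convex lsc, α > 0, and let x⁺ = prox_{αh}(x - αd) for a given vector d. Then for every z: h(x⁺) + ⟨d, x⁺ - x⟩ ≤ h(z) + ⟨d, z - x⟩ + (1/(2α))‖z - x‖² - (1/(2α))‖z - x⁺‖² - (1/(2α))‖x⁺ - x‖². -/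
open RealInnerProductSpace

/-!
The objective `u ↦ α h(u) + ½‖u - (x - αd)‖²` is 1-strongly convex, so its minimizer `x⁺` enjoys
quadratic growth: the objective at `z` exceeds its value at `x⁺` by at least `½‖z - x⁺‖²`.
Expanding `‖· - (x - αd)‖²` around `x` and dividing by `α` gives the three-point inequality.
-/

open Filter Topology Set

section UniformConvexity

variable {E : Type*} [NormedAddCommGroup E] [NormedSpace ℝ E] {s : Set E} {φ : ℝ → ℝ}
  {f g : E → ℝ}

lemma ConvexOn.add_uniformConvexOn (hf : ConvexOn ℝ s f) (hg : UniformConvexOn s φ g) :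
    UniformConvexOn s φ (f + g) := by
  simpa using (uniformConvexOn_zero.2 hf).add hg

lemma UniformConvexOn.add_le_of_isMinOn (hf : UniformConvexOn s φ f) {x z : E}
    (hmin : IsMinOn f s x) (hx : x ∈ s) (hz : z ∈ s) : f x + φ ‖x - z‖ ≤ f z := by
  -- Compare `f x` with `f` on the segment towards `z` and let the step size `t` tend to `0`.
  have hstep : ∀ t ∈ Ioc (0 : ℝ) 1, f x + (1 - t) * φ ‖x - z‖ ≤ f z := by
    rintro t ⟨ht₀, ht₁⟩
    have hseg := hf.2 hx hz (sub_nonneg.2 ht₁) ht₀.le (sub_add_cancel 1 t)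
    have hle : f x ≤ f ((1 - t) • x + t • z) :=
      hmin (hf.1 hx hz (sub_nonneg.2 ht₁) ht₀.le (sub_add_cancel 1 t))
    simp only [smul_eq_mul] at hseg
    have : t * (f x + (1 - t) * φ ‖x - z‖) ≤ t * f z := by linear_combination hle + hseg
    exact le_of_mul_le_mul_left this ht₀
  have hlim : Tendsto (fun t : ℝ => f x + (1 - t) * φ ‖x - z‖) (𝓝[>] 0)
      (𝓝 (f x + φ ‖x - z‖)) := by
    have : Continuous (fun t : ℝ => f x + (1 - t) * φ ‖x - z‖) := by fun_prop
    simpa using (this.tendsto 0).mono_left nhdsWithin_le_nhds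
  exact le_of_tendsto hlim (mem_of_superset (Ioc_mem_nhdsGT one_pos) hstep)

end UniformConvexity

section InnerProductSpace

variable {E : Type*} [NormedAddCommGroup E] [InnerProductSpace ℝ E]

lemma norm_smul_add_smul_sq {a b : ℝ} (hab : a + b = 1) (u v : E) :
    ‖a • u + b • v‖ ^ 2 = a * ‖u‖ ^ 2 + b * ‖v‖ ^ 2 - a * b * ‖u - v‖ ^ 2 := by
  rw [norm_add_sq_real, norm_sub_sq_real, norm_smul, norm_smul, real_inner_smul_left,
    real_inner_smul_right, mul_pow, mul_pow, Real.norm_eq_abs, Real.norm_eq_abs, sq_abs, sq_abs]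
  obtain rfl := eq_sub_of_add_eq hab
  ring

lemma strongConvexOn_mul_norm_sub_sq {s : Set E} (hs : Convex ℝ s) (m : ℝ) (w : E) :
    StrongConvexOn s m (fun u => m / 2 * ‖u - w‖ ^ 2) := by
  refine ⟨hs, fun x _ y _ a b _ _ hab => le_of_eq ?_⟩
  have hsplit : a • x + b • y - w = a • (x - w) + b • (y - w) := by
    rw [smul_sub, smul_sub, sub_add_sub_comm, ← add_smul, hab, one_smul]
  simp only [smul_eq_mul]
  rw [hsplit, norm_smul_add_smul_sq hab, sub_sub_sub_cancel_right]
  ring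

lemma norm_sub_sub_smul_sq (y x d : E) (α : ℝ) :
    ‖y - (x - α • d)‖ ^ 2 = ‖y - x‖ ^ 2 + 2 * α * ⟪d, y - x⟫ + α ^ 2 * ‖d‖ ^ 2 := by
  rw [sub_sub_eq_add_sub, add_sub_right_comm, norm_add_sq_real, real_inner_smul_right,
    real_inner_comm, norm_smul, mul_pow, Real.norm_eq_abs, sq_abs]
  ring

end InnerProductSpace

theorem three_point_inequality_prox_general
    {H : Type*} [NormedAddCommGroup H] [InnerProductSpace ℝ H]
    (h : H → ℝ) (hconv : ConvexOn ℝ Set.univ h)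
    (α : ℝ) (hα : 0 < α) (x d xplus : H)
    (hprox : IsMinOn (fun u => α * h u + 1 / 2 * ‖u - (x - α • d)‖ ^ 2)
      Set.univ xplus) :
    ∀ z : H,
      h xplus + ⟪d, xplus - x⟫ ≤
        h z + ⟪d, z - x⟫ + 1 / (2 * α) * ‖z - x‖ ^ 2
          - 1 / (2 * α) * ‖z - xplus‖ ^ 2 - 1 / (2 * α) * ‖xplus - x‖ ^ 2 := by
  intro z
  have hstrong : StrongConvexOn univ 1 (fun u => α * h u + 1 / 2 * ‖u - (x - α • d)‖ ^ 2) :=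
    (hconv.smul hα.le).add_uniformConvexOn (strongConvexOn_mul_norm_sub_sq convex_univ 1 _)
  have hgrowth := UniformConvexOn.add_le_of_isMinOn hstrong hprox (mem_univ _) (mem_univ z)
  simp only [norm_sub_sub_smul_sq, norm_sub_rev xplus z] at hgrowth
  rw [← mul_le_mul_iff_of_pos_left (by positivity : 0 < 2 * α)]
  field_simp
  linarith

/-- Three-point inequality for the proximal step: if
`x⁺ = prox_{αh}(x - αd)`, i.e. `x⁺` minimizes `u ↦ α h(u) + ½‖u - (x - αd)‖²`,
then for every `z`,
`h(x⁺) + ⟪d, x⁺ - x⟫ ≤ h(z) + ⟪d, z - x⟫ + 1/(2α)‖z-x‖² - 1/(2α)‖z-x⁺‖² - 1/(2α)‖x⁺-x‖²`. -/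
theorem three_point_inequality_prox
    {H : Type*} [NormedAddCommGroup H] [InnerProductSpace ℝ H] [CompleteSpace H]
    (h : H → ℝ) (hconv : ConvexOn ℝ Set.univ h) (hlsc : LowerSemicontinuous h)
    (α : ℝ) (hα : 0 < α) (x d xplus : H)
    (hprox : IsMinOn (fun u => α * h u + 1 / 2 * ‖u - (x - α • d)‖ ^ 2)
      Set.univ xplus) :
    ∀ z : H,
      h xplus + ⟪d, xplus - x⟫ ≤
        h z + ⟪d, z - x⟫ + 1 / (2 * α) * ‖z - x‖ ^ 2
          - 1 / (2 * α) * ‖z - xplus‖ ^ 2 - 1 / (2 * α) * ‖xplus - x‖ ^ 2 :=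
  three_point_inequality_prox_general h hconv α hα x d xplus hprox
end

section
/- Let ω > 1, α₀ > 0, m₀ ≥ 2, α_s = α₀ ω^{-s/2}, m_s = ⌊m₀ ωˢ⌋, and M_S = Σ_{s=0}^S m_s. Then α_S m_S ≥ α₀ ((m₀-1)/√m₀)·(√(ω-1)/√ω)·√(M_S). -/
/-!
Write `t = ω^{S/2}`, so that `α_S = α₀ / t` and `m_S ≥ m₀ t² - 1`. Bounding the floors in `M_S` by
`m₀ ωˢ` and summing the geometric series gives `M_S (ω - 1) ≤ m₀ ω t²`, i.e. the left-hand side is at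
most `α₀ (m₀ - 1) t`. Since `t ≥ 1`, this is at most `α₀ (m₀ t² - 1) / t ≤ α_S m_S`.
-/

open Real Finset

lemma sum_floor_mul_pow_mul_sub_one_le {ω c : ℝ} (hω : 1 < ω) (hc : 0 ≤ c) (n : ℕ) :
    (∑ s ∈ range n, (⌊c * ω ^ s⌋₊ : ℝ)) * (ω - 1) ≤ c * ω ^ n := by
  have hω0 : 0 ≤ ω := by linarith
  calc (∑ s ∈ range n, (⌊c * ω ^ s⌋₊ : ℝ)) * (ω - 1)
      ≤ (∑ s ∈ range n, c * ω ^ s) * (ω - 1) := by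
        gcongr with s
        exact Nat.floor_le (by positivity)
    _ = c * (ω ^ n - 1) := by rw [← mul_sum, mul_assoc, geom_sum_mul]
    _ ≤ c * ω ^ n := by gcongr; linarith

lemma sqrt_sub_one_div_sqrt_mul_sqrt_le {ω x y : ℝ} (hω : 1 ≤ ω) (h : x * (ω - 1) ≤ ω * y) :
    √(ω - 1) / √ω * √x ≤ √y := by
  rw [← sqrt_div' _ (by linarith), ← sqrt_mul (div_nonneg (by linarith) (by linarith))]
  apply sqrt_le_sqrt
  rw [div_mul_eq_mul_div, div_le_iff₀ (by linarith)]
  linarith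

/-- For `ω > 1`, `α₀ > 0`, `m₀ ≥ 2`, step sizes `α_s = α₀ ω^{-s/2}`,
inner-loop lengths `m_s = ⌊m₀ ωˢ⌋` and `M_S = Σ_{s=0}^S m_s`, one has
`α_S m_S ≥ α₀ ((m₀-1)/√m₀)·(√(ω-1)/√ω)·√M_S`. -/
theorem step_times_epoch_length_lower_bound
    (ω : ℝ) (hω : 1 < ω) (α₀ : ℝ) (hα₀ : 0 < α₀) (m₀ : ℕ) (hm₀ : 2 ≤ m₀)
    (α : ℕ → ℝ) (hα : ∀ s, α s = α₀ * ω ^ (-(s : ℝ) / 2))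
    (m : ℕ → ℕ) (hm : ∀ s, m s = ⌊(m₀ : ℝ) * ω ^ s⌋₊)
    (M : ℕ → ℕ) (hM : ∀ S, M S = ∑ s ∈ Finset.range (S + 1), m s) :
    ∀ S : ℕ,
      α₀ * (((m₀ : ℝ) - 1) / Real.sqrt m₀) * (Real.sqrt (ω - 1) / Real.sqrt ω) *
        Real.sqrt (M S) ≤ α S * (m S : ℝ) := by
  intro S
  have hω0 : 0 < ω := by linarith
  have hm₀' : (1 : ℝ) ≤ m₀ := by exact_mod_cast (by omega : 1 ≤ m₀)
  set t := ω ^ ((S : ℝ) / 2)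
  have ht_one : 1 ≤ t := one_le_rpow hω.le (by positivity)
  have ht_sq : t ^ 2 = ω ^ S := by
    rw [← rpow_mul_natCast hω0.le, ← rpow_natCast]; norm_num
  have hαS : α S = α₀ / t := by rw [hα, neg_div, rpow_neg hω0.le, ← div_eq_mul_inv]
  have hmS : (m₀ : ℝ) * t ^ 2 - 1 ≤ m S := by
    rw [ht_sq, hm]; exact (Nat.sub_one_lt_floor _).le
  have hMS : (M S : ℝ) * (ω - 1) ≤ ω * (m₀ * t ^ 2) := by
    rw [hM, ht_sq, ← mul_left_comm, ← pow_succ']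
    push_cast [hm]
    exact sum_floor_mul_pow_mul_sub_one_le hω (Nat.cast_nonneg m₀) (S + 1)
  have hsqrt : √(ω - 1) / √ω * √(M S) ≤ √m₀ * t := by
    simpa [sqrt_mul, sqrt_sq (by linarith : 0 ≤ t)] using
      sqrt_sub_one_div_sqrt_mul_sqrt_le hω.le hMS
  have hsqrt_m₀ : 0 < √(m₀ : ℝ) := sqrt_pos.2 (by linarith)
  calc α₀ * ((m₀ - 1) / √m₀) * (√(ω - 1) / √ω) * √(M S)
      = α₀ * ((m₀ - 1) / √m₀) * (√(ω - 1) / √ω * √(M S)) := by ring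
    _ ≤ α₀ * ((m₀ - 1) / √m₀) * (√m₀ * t) := by gcongr
    _ = α₀ * (m₀ - 1) * t := by field_simp
    _ ≤ α₀ / t * (m₀ * t ^ 2 - 1) := by
        rw [div_mul_eq_mul_div, le_div_iff₀ (by linarith)]
        nlinarith [mul_le_mul_of_nonneg_left (by nlinarith : (1 : ℝ) ≤ t ^ 2) hα₀.le]
    _ ≤ α S * m S := by rw [hαS]; gcongr
end
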